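/- Algorithm A_DSync solves Collaborative 2-AtomicAppends in the synchronous model under every crash pattern in which at most one client has a finite crash time: in every such execution either both r_A is eventually in DLO_A and r_B is eventually in DLO_B, or neither record is ever appended (safety); and in the crash-free execution both records are appended (liveness). -/
import Mathlib


/-!
STATEMENT 3. Algorithm A_DSync solves Collaborative 2-AtomicAppends in the synchronous
model under every crash pattern in which at most one client has a finite crash time: in
every such execution either both r_A is eventually in DLO_A and r_B is eventually in
DLO_B, or neither record is ever appended (safety); and in the crash-free execution both
records are appended (liveness).

Modeling: clients proceed in lockstep rounds; a crash pattern `cr : Client → ℕ∞` gives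
each client its crash time, and a client performs no actions from its crash round onward
(so it acts in round `t` iff `t < cr X`).  Algorithm A_DSync for client X: in round 0,
send r_X to the other client (received at the start of round 1); in round 1, if the other
client's record was received, append r_X to DLO_X; in round 2, if the other client's
record was received, append it to the other client's ledger; otherwise perform no appends.
Appends are idempotent and take effect in their round, so "r_X is ever in DLO_X" is
equivalent to: X appends its own record in round 1, or the other client appends r_X in
round 2.
-/

/-- The two clients. -/
inductive Client where
  | A
  | B
deriving DecidableEq

/-- The other client. -/
def Client.other : Client → Client
  | .A => .B
  | .B => .A

/-- In A_DSync, client `X` sends its record in round 0 iff it has not yet crashed. -/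
def sendsRecord (cr : Client → ℕ∞) (X : Client) : Prop :=
  (0 : ℕ∞) < cr X

/-- Client `X` receives the other client's record (at the start of round 1) iff the
other client sent it in round 0. -/
def receivesRecord (cr : Client → ℕ∞) (X : Client) : Prop :=
  sendsRecord cr X.other

/-- In A_DSync, client `X` appends its own record r_X to DLO_X in round 1 iff it is
still alive in round 1 and it received the other client's record. -/
def appendsOwn (cr : Client → ℕ∞) (X : Client) : Prop :=
  (1 : ℕ∞) < cr X ∧ receivesRecord cr X

/-- In A_DSync, client `X` appends the other client's record to the other ledger in
round 2 iff it is still alive in round 2 and it received the other client's record. -/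
def appendsOther (cr : Client → ℕ∞) (X : Client) : Prop :=
  (2 : ℕ∞) < cr X ∧ receivesRecord cr X

/-- Record r_X is ever in DLO_X in the execution of A_DSync under `cr`. -/
def recordInDLO (cr : Client → ℕ∞) (X : Client) : Prop :=
  appendsOwn cr X ∨ appendsOther cr X.other

theorem adsync_solves_collaborative_atomic_appends
    (cr : Client → ℕ∞)
    -- at most one client has a finite crash time
    (h_atMostOne : cr Client.A = ⊤ ∨ cr Client.B = ⊤) :
    -- safety: either both records are eventually appended, or neither ever is
    ((recordInDLO cr Client.A ∧ recordInDLO cr Client.B) ∨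
      (¬ recordInDLO cr Client.A ∧ ¬ recordInDLO cr Client.B)) ∧
    -- liveness: in the crash-free execution both records are appended
    ((cr Client.A = ⊤ ∧ cr Client.B = ⊤) →
      (recordInDLO cr Client.A ∧ recordInDLO cr Client.B)) := by
  simp only [recordInDLO, appendsOwn, appendsOther, receivesRecord, sendsRecord, Client.other]
  rcases h_atMostOne with h | h <;> rw [h] <;>
    [by_cases hb : (0:ℕ∞) < cr Client.B; by_cases ha : (0:ℕ∞) < cr Client.A] <;>
    simp_all [not_lt, lt_top_iff_ne_top]
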